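/- For every non-negative even integer k, the identity A^{12} · A^{6k+12} · δ⁻⁴ · ((F_{k+4} + δ²)(F_{k+3} + δ²)(F_{k+5} + δ²) + (-A⁻⁴)^k·(δ² - 1)·F_{k+4}·F_{k+3}·F_{k+5}) = A^{6k+24} · δ⁻⁴ · ((F_{k+2} + δ²)(F_{k+1} + δ²)(F_{k+3} + δ²) + (-A⁻⁴)^{k+6}·(δ² - 1)·F_{k+2}·F_{k+1}·F_{k+3}) holds in the field ℚ(A). (Via the closed formula of Theorem 1.1 this says A^{12}·⟨D(k; k+4, k+3, k+5)⟩ = ⟨D(k+6; k+2, k+1, k+3)⟩ for the Kauffman brackets of the two pretzel diagrams.) -/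

import Mathlib

/-- The variable `A`, a transcendental generator of the field ℚ(A) of rational
functions in one variable over ℚ. -/
noncomputable def A : RatFunc ℚ := RatFunc.X

/-- `δ = -A² - A⁻²` in ℚ(A). -/
noncomputable def δ : RatFunc ℚ := -A ^ 2 - A ^ (-2 : ℤ)

/-- `F n = (-A⁻⁴)ⁿ - 1` in ℚ(A), for an integer `n`. -/
noncomputable def F (n : ℤ) : RatFunc ℚ := (-A ^ (-4 : ℤ)) ^ n - 1

lemma A_ne_zero : A ≠ 0 := RatFunc.X_ne_zero

lemma A_pow_four_add_one_ne_zero : A ^ 4 + 1 ≠ 0 := by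
  have h : ((Polynomial.X : Polynomial ℚ) ^ 4 + 1) ≠ 0 := by
    intro h
    have := congrArg (Polynomial.coeff · 0) h
    simp [Polynomial.coeff_X_pow] at this
  have := RatFunc.algebraMap_ne_zero h
  simpa [map_add, map_pow, RatFunc.algebraMap_X, A] using this

lemma delta_sq : δ ^ 2 = (A ^ 4 + 1) ^ 2 * (A ^ 4)⁻¹ := by
  have hA : A ≠ 0 := A_ne_zero
  rw [δ, zpow_neg, show ((2:ℤ)) = ((2:ℕ):ℤ) from rfl, zpow_natCast]
  field_simp
  ring

lemma delta_ne_zero : δ ≠ 0 := by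
  intro h
  have := delta_sq
  rw [h] at this
  have h2 : (A ^ 4 + 1) ^ 2 = 0 := by
    have hA4 : (A ^ 4 : RatFunc ℚ) ≠ 0 := pow_ne_zero _ A_ne_zero
    field_simp at this
    simpa [hA4, A_ne_zero] using this.symm
  exact A_pow_four_add_one_ne_zero (pow_eq_zero_iff (by norm_num) |>.mp h2)

lemma delta_zpow_neg_four : δ ^ (-4 : ℤ) = A ^ 8 * ((A ^ 4 + 1) ^ 4)⁻¹ := by
  have hA : A ≠ 0 := A_ne_zero
  have h4 : A ^ 4 + 1 ≠ 0 := A_pow_four_add_one_ne_zero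
  have hδ4 : δ ^ 4 = (A ^ 4 + 1) ^ 4 * (A ^ 8)⁻¹ := by
    have := delta_sq
    calc δ ^ 4 = (δ ^ 2) ^ 2 := by ring
    _ = ((A ^ 4 + 1) ^ 2 * (A ^ 4)⁻¹) ^ 2 := by rw [this]
    _ = (A ^ 4 + 1) ^ 4 * (A ^ 8)⁻¹ := by
        field_simp
  rw [zpow_neg, show ((4:ℤ)) = ((4:ℕ):ℤ) from rfl, zpow_natCast, hδ4]
  rw [mul_inv, inv_inv]
  ring

lemma neg_A_zpow : (-A ^ (-4 : ℤ)) = -(A ^ 4)⁻¹ := by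
  rw [zpow_neg, show ((4:ℤ)) = ((4:ℕ):ℤ) from rfl, zpow_natCast]

set_option maxHeartbeats 4000000 in
theorem bracket_equality (k : ℕ) (hk : Even k) :
    A ^ (12 : ℕ) * (A ^ (6 * (k : ℤ) + 12) * δ ^ (-4 : ℤ) *
        ((F (k + 4) + δ ^ 2) * (F (k + 3) + δ ^ 2) * (F (k + 5) + δ ^ 2)
          + (-A ^ (-4 : ℤ)) ^ (k : ℤ) * (δ ^ 2 - 1) * F (k + 4) * F (k + 3) * F (k + 5)))
      = A ^ (6 * (k : ℤ) + 24) * δ ^ (-4 : ℤ) *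
        ((F (k + 2) + δ ^ 2) * (F (k + 1) + δ ^ 2) * (F (k + 3) + δ ^ 2)
          + (-A ^ (-4 : ℤ)) ^ ((k : ℤ) + 6) * (δ ^ 2 - 1) * F (k + 2) * F (k + 1) * F (k + 3)) := by
  have hA : A ≠ 0 := A_ne_zero
  have hkZ : Even (k : ℤ) := (Int.even_coe_nat k).mpr hk
  have hwne : (A ^ (k : ℕ)) ≠ 0 := pow_ne_zero _ hA
  have hm : (-A ^ (-4 : ℤ)) ≠ 0 := by
    rw [neg_A_zpow]
    simp [pow_ne_zero, hA]
  have hneg : (-A ^ (-4 : ℤ)) ^ (k : ℤ) = ((A ^ k) ^ 4)⁻¹ := by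
    rw [hkZ.neg_zpow, ← zpow_mul, mul_comm, zpow_mul, zpow_natCast,
      show ((-4:ℤ)) = -((4:ℕ):ℤ) from rfl, zpow_neg, zpow_natCast]
  have hF : ∀ j : ℕ, F ((k : ℤ) + (j : ℤ)) = ((A ^ k) ^ 4)⁻¹ * (-(A ^ 4)⁻¹) ^ j - 1 := by
    intro j
    rw [F, zpow_add₀ hm, hneg, neg_A_zpow, zpow_natCast]
  have hF4 : F ((k:ℤ) + 4) = ((A ^ k) ^ 4)⁻¹ * (-(A ^ 4)⁻¹) ^ 4 - 1 := hF 4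
  have hF3 : F ((k:ℤ) + 3) = ((A ^ k) ^ 4)⁻¹ * (-(A ^ 4)⁻¹) ^ 3 - 1 := hF 3
  have hF5 : F ((k:ℤ) + 5) = ((A ^ k) ^ 4)⁻¹ * (-(A ^ 4)⁻¹) ^ 5 - 1 := hF 5
  have hF2 : F ((k:ℤ) + 2) = ((A ^ k) ^ 4)⁻¹ * (-(A ^ 4)⁻¹) ^ 2 - 1 := hF 2
  have hF1 : F ((k:ℤ) + 1) = ((A ^ k) ^ 4)⁻¹ * (-(A ^ 4)⁻¹) ^ 1 - 1 := hF 1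
  have hpow1 : A ^ (6 * (k : ℤ) + 12) = (A ^ k) ^ 6 * A ^ 12 := by
    rw [zpow_add₀ hA, mul_comm (6 : ℤ), zpow_mul, zpow_natCast,
      show ((6:ℤ)) = ((6:ℕ):ℤ) from rfl, zpow_natCast,
      show ((12:ℤ)) = ((12:ℕ):ℤ) from rfl, zpow_natCast]
  have hpow2 : A ^ (6 * (k : ℤ) + 24) = (A ^ k) ^ 6 * A ^ 24 := by
    rw [zpow_add₀ hA, mul_comm (6 : ℤ), zpow_mul, zpow_natCast,
      show ((6:ℤ)) = ((6:ℕ):ℤ) from rfl, zpow_natCast,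
      show ((24:ℤ)) = ((24:ℕ):ℤ) from rfl, zpow_natCast]
  have h6 : (-A ^ (-4 : ℤ)) ^ ((k : ℤ) + 6) = ((A ^ k) ^ 4)⁻¹ * ((A ^ 4)⁻¹) ^ 6 := by
    rw [zpow_add₀ hm, hneg, neg_A_zpow, show ((6:ℤ)) = ((6:ℕ):ℤ) from rfl, zpow_natCast]
    ring
  rw [hF4, hF3, hF5, hF2, hF1, hneg, hpow1, hpow2, h6,
    delta_sq, delta_zpow_neg_four]
  have h4 : A ^ 4 + 1 ≠ 0 := A_pow_four_add_one_ne_zero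
  generalize hgen : A ^ k = w at hwne ⊢
  field_simp
  ring
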